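/- Let n be a positive natural number, let φ : ℝⁿ → ℝ be twice continuously differentiable, and define the Witten Laplacian L h = Δh - ∇φ · ∇h for h : ℝⁿ → ℝ. Then for every three-times continuously differentiable g : ℝⁿ → ℝ the pointwise Bochner identity holds: (1/2) · L( ‖∇g‖² ) = ‖∇²g‖_F² + ⟨∇g, ∇(Lg)⟩ + (∇g)ᵀ (∇²φ) (∇g), where ‖∇²g‖_F² = Σ_{i,j=1}^{n} (∂²g/∂xᵢ∂xⱼ)² is the squared Frobenius norm of the Hessian of g and ∇²φ is the Hessian matrix of φ. -/

import Mathlib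

/-!
In coordinates every term is a finite sum of products of partial derivatives `∂ᵢ`. The product
rule together with `∂ⱼΔg = Δ∂ⱼg` gives the Euclidean Bochner formula
`½Δ‖∇g‖² = ‖∇²g‖² + ⟨∇g, ∇Δg⟩`, and the symmetry of `∇²g` gives
`½⟨∇φ, ∇‖∇g‖²⟩ = ⟨∇g, ∇⟨∇φ, ∇g⟩⟩ - (∇g)ᵀ∇²φ∇g`. Subtracting the second identity from the first
yields the formula, because `∇(Lg) = ∇Δg - ∇⟨∇φ, ∇g⟩`.
-/

open MeasureTheory Real
open scoped BigOperators RealInnerProductSpace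

noncomputable section

/-- The Euclidean Laplacian `Δf(x) = Σᵢ ∂²f/∂xᵢ²(x)` of `f : ℝⁿ → ℝ`. -/
def lap {n : ℕ} (f : EuclideanSpace ℝ (Fin n) → ℝ) (x : EuclideanSpace ℝ (Fin n)) : ℝ :=
  ∑ i : Fin n,
    fderiv ℝ (fun y => fderiv ℝ f y (EuclideanSpace.single i 1)) x (EuclideanSpace.single i 1)

/-- The `(i,j)` entry `∂²f/∂xᵢ∂xⱼ(x)` of the Hessian matrix of `f : ℝⁿ → ℝ`. -/
def hess {n : ℕ} (f : EuclideanSpace ℝ (Fin n) → ℝ) (x : EuclideanSpace ℝ (Fin n))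
    (i j : Fin n) : ℝ :=
  fderiv ℝ (fun y => fderiv ℝ f y (EuclideanSpace.single j 1)) x (EuclideanSpace.single i 1)

/-- The Witten Laplacian `L h = Δh - ∇φ·∇h`. -/
def wittenLap {n : ℕ} (φ h : EuclideanSpace ℝ (Fin n) → ℝ)
    (x : EuclideanSpace ℝ (Fin n)) : ℝ :=
  lap h x - ⟪gradient φ x, gradient h x⟫

theorem gradient_fun_sub {F : Type*} [NormedAddCommGroup F] [InnerProductSpace ℝ F]
    [CompleteSpace F] {f h : F → ℝ} {x : F} (hf : DifferentiableAt ℝ f x)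
    (hh : DifferentiableAt ℝ h x) :
    gradient (fun y => f y - h y) x = gradient f x - gradient h x := by
  simp [gradient, fderiv_fun_sub hf hh]

section PartialDeriv

variable {ι : Type*} [Fintype ι] [DecidableEq ι] {f h : EuclideanSpace ℝ ι → ℝ}

def partialDeriv (i : ι) (f : EuclideanSpace ℝ ι → ℝ) (x : EuclideanSpace ℝ ι) : ℝ :=
  fderiv ℝ f x (EuclideanSpace.single i 1)

theorem contDiff_partialDeriv {k m : WithTop ℕ∞} (hf : ContDiff ℝ k f) (hmk : m + 1 ≤ k)
    (i : ι) : ContDiff ℝ m (partialDeriv i f) :=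
  (hf.fderiv_right hmk).clm_apply contDiff_const

theorem partialDeriv_fun_add (hf : Differentiable ℝ f) (hh : Differentiable ℝ h) (i : ι) :
    partialDeriv i (fun y => f y + h y) = fun y => partialDeriv i f y + partialDeriv i h y := by
  funext y
  simp [partialDeriv, fderiv_fun_add (hf y) (hh y)]

theorem partialDeriv_fun_mul (hf : Differentiable ℝ f) (hh : Differentiable ℝ h) (i : ι) :
    partialDeriv i (fun y => f y * h y) =
      fun y => partialDeriv i f y * h y + f y * partialDeriv i h y := by
  funext y
  simp only [partialDeriv, fderiv_fun_mul (hf y) (hh y), add_apply, smul_apply,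
    smul_eq_mul]
  ring

theorem partialDeriv_fun_sum {κ : Type*} {s : Finset κ} {F : κ → EuclideanSpace ℝ ι → ℝ}
    (hF : ∀ k ∈ s, Differentiable ℝ (F k)) (i : ι) :
    partialDeriv i (fun y => ∑ k ∈ s, F k y) = fun y => ∑ k ∈ s, partialDeriv i (F k) y := by
  funext y
  simp [partialDeriv, fderiv_fun_sum fun k hk => hF k hk y]

theorem partialDeriv_comm (hf : ContDiff ℝ 2 f) (i j : ι) :
    partialDeriv i (partialDeriv j f) = partialDeriv j (partialDeriv i f) := by
  have hfderiv₂ : ∀ (j : ι) x v, fderiv ℝ (partialDeriv j f) x v =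
      fderiv ℝ (fderiv ℝ f) x v (EuclideanSpace.single j 1) := fun j x v => by
    rw [show partialDeriv j f = fun y => fderiv ℝ f y (EuclideanSpace.single j 1) from rfl,
      fderiv_clm_apply ((hf.fderiv_right le_rfl).differentiable one_ne_zero x)
      (differentiableAt_const _)]
    simp
  funext x
  simp only [partialDeriv, hfderiv₂]
  exact hf.contDiffAt.isSymmSndFDerivAt (by simp) _ _

theorem gradient_apply_eq_partialDeriv (f : EuclideanSpace ℝ ι → ℝ) (x : EuclideanSpace ℝ ι)
    (i : ι) : gradient f x i = partialDeriv i f x := by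
  have : gradient f x i = ⟪gradient f x, EuclideanSpace.single i 1⟫ := by
    rw [EuclideanSpace.inner_single_right]; simp
  rw [this, gradient, InnerProductSpace.toDual_symm_apply, partialDeriv]

theorem inner_gradient_eq_sum (f h : EuclideanSpace ℝ ι → ℝ) (x : EuclideanSpace ℝ ι) :
    ⟪gradient f x, gradient h x⟫ = ∑ i, partialDeriv i f x * partialDeriv i h x := by
  simp only [PiLp.inner_apply, RCLike.inner_apply, conj_trivial, gradient_apply_eq_partialDeriv,
    mul_comm]

theorem differentiable_partialDeriv (hf : ContDiff ℝ 2 f) (i : ι) :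
    Differentiable ℝ (partialDeriv i f) :=
  (contDiff_partialDeriv hf (m := 1) (by norm_num) i).differentiable one_ne_zero

theorem partialDeriv_inner_gradient (hf : ContDiff ℝ 2 f) (hh : ContDiff ℝ 2 h) (i : ι)
    (x : EuclideanSpace ℝ ι) :
    partialDeriv i (fun y => ⟪gradient f y, gradient h y⟫) x =
      ∑ k, (partialDeriv i (partialDeriv k f) x * partialDeriv k h x +
        partialDeriv k f x * partialDeriv i (partialDeriv k h) x) := by
  simp only [inner_gradient_eq_sum]
  rw [partialDeriv_fun_sum (F := fun k y => partialDeriv k f y * partialDeriv k h y) fun k _ =>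
    (differentiable_partialDeriv hf k).mul (differentiable_partialDeriv hh k)]
  refine Finset.sum_congr rfl fun k _ => ?_
  rw [partialDeriv_fun_mul (differentiable_partialDeriv hf k) (differentiable_partialDeriv hh k)]

theorem differentiable_inner_gradient (hf : ContDiff ℝ 2 f) (hh : ContDiff ℝ 2 h) :
    Differentiable ℝ (fun y => ⟪gradient f y, gradient h y⟫) := by
  simp only [inner_gradient_eq_sum]
  exact Differentiable.fun_sum fun k _ =>
    (differentiable_partialDeriv hf k).mul (differentiable_partialDeriv hh k)

end PartialDeriv

section Laplacian

variable {n : ℕ} {f g φ u v : EuclideanSpace ℝ (Fin n) → ℝ}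

theorem lap_eq_sum_partialDeriv (f : EuclideanSpace ℝ (Fin n) → ℝ) :
    lap f = fun x => ∑ i, partialDeriv i (partialDeriv i f) x :=
  rfl

theorem hess_eq_partialDeriv (f : EuclideanSpace ℝ (Fin n) → ℝ) (x : EuclideanSpace ℝ (Fin n))
    (i j : Fin n) : hess f x i j = partialDeriv i (partialDeriv j f) x :=
  rfl

theorem contDiff_lap {m : WithTop ℕ∞} (hf : ContDiff ℝ (m + 2) f) : ContDiff ℝ m (lap f) := by
  have hmk : m + 1 + 1 ≤ m + 2 := by rw [add_assoc, one_add_one_eq_two]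
  exact ContDiff.sum fun i _ => contDiff_partialDeriv (contDiff_partialDeriv hf hmk i) le_rfl i

theorem lap_fun_sum {κ : Type*} {s : Finset κ} {u : κ → EuclideanSpace ℝ (Fin n) → ℝ}
    (hu : ∀ k ∈ s, ContDiff ℝ 2 (u k)) (x : EuclideanSpace ℝ (Fin n)) :
    lap (fun y => ∑ k ∈ s, u k y) x = ∑ k ∈ s, lap (u k) x := by
  simp only [lap_eq_sum_partialDeriv]
  rw [Finset.sum_comm]
  refine Finset.sum_congr rfl fun i _ => ?_
  rw [partialDeriv_fun_sum fun k hk => (hu k hk).differentiable two_ne_zero,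
    partialDeriv_fun_sum fun k hk => differentiable_partialDeriv (hu k hk) i]

theorem lap_fun_mul (hu : ContDiff ℝ 2 u) (hv : ContDiff ℝ 2 v) (x : EuclideanSpace ℝ (Fin n)) :
    lap (fun y => u y * v y) x =
      lap u x * v x + 2 * ∑ i, partialDeriv i u x * partialDeriv i v x + u x * lap v x := by
  have hu₁ := hu.differentiable two_ne_zero
  have hv₁ := hv.differentiable two_ne_zero
  simp only [lap_eq_sum_partialDeriv, Finset.mul_sum, Finset.sum_mul, ← Finset.sum_add_distrib]
  refine Finset.sum_congr rfl fun i _ => ?_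
  have hui := differentiable_partialDeriv hu i
  have hvi := differentiable_partialDeriv hv i
  rw [partialDeriv_fun_mul hu₁ hv₁, partialDeriv_fun_add (hui.fun_mul hv₁) (hu₁.fun_mul hvi),
    partialDeriv_fun_mul hui hv₁, partialDeriv_fun_mul hu₁ hvi]
  ring

theorem partialDeriv_lap (hf : ContDiff ℝ 3 f) (j : Fin n) :
    partialDeriv j (lap f) = lap (partialDeriv j f) := by
  have hf₂ : ContDiff ℝ 2 f := hf.of_le (by norm_num)
  have hf' : ∀ i, ContDiff ℝ 2 (partialDeriv i f) := contDiff_partialDeriv hf (by norm_num)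
  funext x
  rw [lap_eq_sum_partialDeriv, lap_eq_sum_partialDeriv,
    partialDeriv_fun_sum fun i _ => differentiable_partialDeriv (hf' i) i]
  refine Finset.sum_congr rfl fun i _ => ?_
  rw [partialDeriv_comm (hf' i), partialDeriv_comm hf₂ j i]

theorem half_lap_norm_sq_gradient (hg : ContDiff ℝ 3 g) (x : EuclideanSpace ℝ (Fin n)) :
    (1 / 2) * lap (fun y => ‖gradient g y‖ ^ 2) x =
      ∑ i, ∑ j, hess g x i j ^ 2 + ⟪gradient g x, gradient (lap g) x⟫ := by
  have hg' : ∀ j, ContDiff ℝ 2 (partialDeriv j g) := contDiff_partialDeriv hg (by norm_num)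
  simp only [← real_inner_self_eq_norm_sq, inner_gradient_eq_sum]
  rw [lap_fun_sum fun j _ => (hg' j).mul (hg' j), Finset.sum_comm]
  simp only [lap_fun_mul (hg' _) (hg' _), partialDeriv_lap hg, hess_eq_partialDeriv, sq]
  rw [Finset.mul_sum, ← Finset.sum_add_distrib]
  exact Finset.sum_congr rfl fun j _ => by ring

theorem half_inner_gradient_norm_sq_gradient (hφ : ContDiff ℝ 2 φ) (hg : ContDiff ℝ 2 g)
    (x : EuclideanSpace ℝ (Fin n)) :
    (1 / 2) * ⟪gradient φ x, gradient (fun y => ‖gradient g y‖ ^ 2) x⟫ =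
      ⟪gradient g x, gradient (fun y => ⟪gradient φ y, gradient g y⟫) x⟫ -
        ∑ i, ∑ j, hess φ x i j * gradient g x i * gradient g x j := by
  simp only [← real_inner_self_eq_norm_sq]
  rw [inner_gradient_eq_sum, inner_gradient_eq_sum]
  simp only [partialDeriv_inner_gradient hg hg, partialDeriv_inner_gradient hφ hg,
    hess_eq_partialDeriv, gradient_apply_eq_partialDeriv]
  have hsymm :
      ∑ j, ∑ k, partialDeriv j g x * (partialDeriv k φ x * partialDeriv j (partialDeriv k g) x) =
        ∑ i, ∑ j, partialDeriv i φ x * partialDeriv i (partialDeriv j g) x *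
          partialDeriv j g x := by
    rw [Finset.sum_comm]
    refine Finset.sum_congr rfl fun i _ => Finset.sum_congr rfl fun j _ => ?_
    rw [partialDeriv_comm hg]
    ring
  simp only [mul_add, Finset.mul_sum, Finset.sum_add_distrib, hsymm]
  rw [← sub_eq_zero]
  simp only [← Finset.sum_add_distrib, ← Finset.sum_sub_distrib]
  exact Finset.sum_eq_zero fun i _ => Finset.sum_eq_zero fun j _ => by ring

theorem gradient_wittenLap (hφ : ContDiff ℝ 2 φ) (hg : ContDiff ℝ 3 g)
    (x : EuclideanSpace ℝ (Fin n)) :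
    gradient (wittenLap φ g) x =
      gradient (lap g) x - gradient (fun y => ⟪gradient φ y, gradient g y⟫) x :=
  gradient_fun_sub ((contDiff_lap (m := 1) hg).differentiable one_ne_zero x)
    (differentiable_inner_gradient hφ (hg.of_le (by norm_num)) x)

end Laplacian

theorem witten_bochner_identity
    (n : ℕ)
    (φ : EuclideanSpace ℝ (Fin n) → ℝ) (hφ : ContDiff ℝ 2 φ)
    (g : EuclideanSpace ℝ (Fin n) → ℝ) (hg : ContDiff ℝ 3 g) :
    ∀ x : EuclideanSpace ℝ (Fin n),
      (1 / 2) * wittenLap φ (fun y => ‖gradient g y‖ ^ 2) x =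
        (∑ i : Fin n, ∑ j : Fin n, hess g x i j ^ 2) +
          ⟪gradient g x, gradient (fun y => wittenLap φ g y) x⟫ +
          ∑ i : Fin n, ∑ j : Fin n, hess φ x i j * gradient g x i * gradient g x j := by
  intro x
  rw [wittenLap, gradient_wittenLap hφ hg x, inner_sub_right]
  linarith [half_lap_norm_sq_gradient hg x,
    half_inner_gradient_norm_sq_gradient hφ (hg.of_le (by norm_num)) x]
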